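/- For q = 1, the function f₁(x) = −(2/3 − x)log₂(2/3 − x) − 2x log₂(2x) − (1/3 − x)log₂(1/3 − x) on (0, 1/3) attains its maximum at x = (√33 − 3)/18. -/

import Mathlib

open scoped BigOperators

/-- A 3-tensor over a field `F`, given by its dimensions and coordinate array. -/
structure Tensor (F : Type) [Field F] where
  n1 : ℕ
  n2 : ℕ
  n3 : ℕ
  val : Fin n1 → Fin n2 → Fin n3 → F

namespace Tensor

variable {F : Type} [Field F]

/-- `Restricts t s` means `t ≥ s`: there are linear maps on the three factors mapping `t` to `s`. -/
def Restricts (t s : Tensor F) : Prop :=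
  ∃ (A1 : Matrix (Fin s.n1) (Fin t.n1) F) (A2 : Matrix (Fin s.n2) (Fin t.n2) F)
    (A3 : Matrix (Fin s.n3) (Fin t.n3) F),
    ∀ a b c, s.val a b c =
      ∑ i, ∑ j, ∑ k, A1 a i * A2 b j * A3 c k * t.val i j k

/-- Kronecker (tensor) product of two 3-tensors. -/
def tmul (t s : Tensor F) : Tensor F :=
  ⟨t.n1 * s.n1, t.n2 * s.n2, t.n3 * s.n3, fun a b c =>
    t.val (finProdFinEquiv.symm a).1 (finProdFinEquiv.symm b).1 (finProdFinEquiv.symm c).1 *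
    s.val (finProdFinEquiv.symm a).2 (finProdFinEquiv.symm b).2 (finProdFinEquiv.symm c).2⟩

/-- The trivial `1×1×1` tensor. -/
def unit : Tensor F := ⟨1, 1, 1, fun _ _ _ => 1⟩

/-- Kronecker power. -/
def tpow (t : Tensor F) : ℕ → Tensor F
  | 0 => unit
  | n + 1 => tmul (tpow t n) t

/-- The rank-`n` diagonal (unit) tensor `⟨n⟩`. -/
def diag (n : ℕ) : Tensor F :=
  ⟨n, n, n, fun i j k => if i = j ∧ j = k then 1 else 0⟩

/-- The matrix multiplication tensor `⟨a,b,c⟩`. -/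
def mm (a b c : ℕ) : Tensor F :=
  ⟨a * b, b * c, c * a, fun x y z =>
    if (finProdFinEquiv.symm x).1 = (finProdFinEquiv.symm z).2 ∧
       (finProdFinEquiv.symm x).2 = (finProdFinEquiv.symm y).1 ∧
       (finProdFinEquiv.symm y).2 = (finProdFinEquiv.symm z).1 then 1 else 0⟩

/-- A tensor is simple if it is of the form `u ⊗ v ⊗ w`. -/
def IsSimple (t : Tensor F) : Prop :=
  ∃ (u : Fin t.n1 → F) (v : Fin t.n2 → F) (w : Fin t.n3 → F),
    ∀ i j k, t.val i j k = u i * v j * w k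

/-- Tensor rank. -/
noncomputable def rank (t : Tensor F) : ℕ := sInf {n | Restricts (diag n) t}

/-- Subrank. -/
noncomputable def subrank (t : Tensor F) : ℕ := sSup {n | Restricts t (diag n)}

/-- Asymptotic rank `Q̃(t) = lim R(t^{⊗n})^{1/n} = inf_n R(t^{⊗n})^{1/n}`. -/
noncomputable def asympRank (t : Tensor F) : ℝ :=
  ⨅ n : ℕ+, (rank (tpow t n) : ℝ) ^ ((n : ℝ)⁻¹)

/-- Asymptotic subrank `Q(t) = lim Q(t^{⊗n})^{1/n} = sup_n Q(t^{⊗n})^{1/n}`. -/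
noncomputable def asympSubrank (t : Tensor F) : ℝ :=
  ⨆ n : ℕ+, (subrank (tpow t n) : ℝ) ^ ((n : ℝ)⁻¹)

/-- `relexpSeq t s n = min { m : t^{⊗m} ≥ s^{⊗n} }`. -/
noncomputable def relexpSeq (t s : Tensor F) (n : ℕ) : ℕ :=
  sInf {m | Restricts (tpow t m) (tpow s n)}

/-- Relative exponent `ω(t,s) = lim_n (1/n) min{m : t^{⊗m} ≥ s^{⊗n}} = sup_n ...`. -/
noncomputable def relexp (t s : Tensor F) : ℝ :=
  ⨆ n : ℕ+, (relexpSeq t s n : ℝ) / (n : ℝ)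

/-- Irreversibility, as the product of relative exponents. -/
noncomputable def irr (t : Tensor F) : ℝ := relexp (diag 2) t * relexp t (diag 2)

/-- Irreversibility, as a ratio of logarithms. -/
noncomputable def irrL (t : Tensor F) : ℝ :=
  Real.logb 2 (asympRank t) / Real.logb 2 (asympSubrank t)

/-- First flattening of a tensor, an `n1 × (n2·n3)` matrix. -/
def flatten1 (t : Tensor F) : Matrix (Fin t.n1) (Fin t.n2 × Fin t.n3) F :=
  fun a p => t.val a p.1 p.2

/-- Second flattening. -/
def flatten2 (t : Tensor F) : Matrix (Fin t.n2) (Fin t.n1 × Fin t.n3) F :=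
  fun b p => t.val p.1 b p.2

/-- Third flattening. -/
def flatten3 (t : Tensor F) : Matrix (Fin t.n3) (Fin t.n1 × Fin t.n2) F :=
  fun c p => t.val p.1 p.2 c

end Tensor

/-- The function `f₁` from the analysis of `CW₁`. -/
noncomputable def fCW1 (x : ℝ) : ℝ :=
  -(2/3 - x) * Real.logb 2 (2/3 - x) - 2 * x * Real.logb 2 (2 * x)
    - (1/3 - x) * Real.logb 2 (1/3 - x)

/-!
Since `f₁ · log 2 = negMulLog (2/3 - x) + negMulLog (2x) + negMulLog (1/3 - x)`, the derivative
`f₁' = log₂ (2/3 - x) + log₂ (1/3 - x) - 2 log₂ (2x)` is strictly decreasing on `(0, 1/3)`, so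
`f₁` is strictly concave there. `f₁'` vanishes iff `(2/3 - x)(1/3 - x) = (2x)²`, i.e.
`27x² + 9x - 2 = 0`, whose root in `(0, 1/3)` is `(√33 - 3)/18`; a concave function is maximal
at an interior critical point.
-/

open Set Real

theorem ConcaveOn.isMaxOn_of_hasDerivAt_eq_zero {S : Set ℝ} {f : ℝ → ℝ} {x : ℝ}
    (hf : ConcaveOn ℝ S f) (hx : x ∈ interior S) (hd : HasDerivAt f 0 x) : IsMaxOn f S x := by
  have hmin : IsMinOn (fun y => -f y) S x :=
    hf.neg.isMinOn_of_rightDeriv_eq_zero hx <| by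
      simpa using hd.neg.hasDerivWithinAt.derivWithin (uniqueDiffWithinAt_Ioi x)
  exact isMaxOn_iff.mpr fun y hy => neg_le_neg_iff.mp (isMinOn_iff.mp hmin y hy)

lemma fCW1_eq_negMulLog (x : ℝ) :
    fCW1 x = (negMulLog (2/3 - x) + negMulLog (2 * x) + negMulLog (1/3 - x)) / log 2 := by
  simp only [fCW1, negMulLog, logb]
  ring

noncomputable def fCW1Deriv (x : ℝ) : ℝ :=
  logb 2 (2/3 - x) + logb 2 (1/3 - x) - 2 * logb 2 (2 * x)

lemma hasDerivAt_fCW1 {x : ℝ} (hx : x ∈ Ioo (0:ℝ) (1/3)) :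
    HasDerivAt fCW1 (fCW1Deriv x) x := by
  obtain ⟨hx0, hx3⟩ := hx
  have hA := (hasDerivAt_negMulLog (by linarith : (2/3 - x) ≠ 0)).comp x
    ((hasDerivAt_id x).const_sub (2/3))
  have hB := (hasDerivAt_negMulLog (by linarith : (2 * x) ≠ 0)).comp x
    ((hasDerivAt_id x).const_mul 2)
  have hC := (hasDerivAt_negMulLog (by linarith : (1/3 - x) ≠ 0)).comp x
    ((hasDerivAt_id x).const_sub (1/3))
  rw [show fCW1 = _ from funext fCW1_eq_negMulLog]
  refine (((hA.add hB).add hC).div_const (log 2)).congr_deriv ?_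
  simp only [fCW1Deriv, logb]
  ring

lemma strictAntiOn_fCW1Deriv : StrictAntiOn fCW1Deriv (Ioo (0:ℝ) (1/3)) := by
  rintro x ⟨hx0, hx3⟩ y ⟨hy0, hy3⟩ hxy
  have h₁ : logb 2 (2/3 - y) < logb 2 (2/3 - x) :=
    logb_lt_logb one_lt_two (by linarith) (by linarith)
  have h₂ : logb 2 (1/3 - y) < logb 2 (1/3 - x) :=
    logb_lt_logb one_lt_two (by linarith) (by linarith)
  have h₃ : logb 2 (2 * x) < logb 2 (2 * y) :=
    logb_lt_logb one_lt_two (by linarith) (by linarith)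
  simp only [fCW1Deriv]
  linarith

lemma strictConcaveOn_fCW1 : StrictConcaveOn ℝ (Ioo (0:ℝ) (1/3)) fCW1 := by
  refine StrictAntiOn.strictConcaveOn_of_deriv (convex_Ioo _ _)
    (fun x hx => (hasDerivAt_fCW1 hx).continuousAt.continuousWithinAt) ?_
  rw [interior_Ioo]
  exact strictAntiOn_fCW1Deriv.congr fun x hx => (hasDerivAt_fCW1 hx).deriv.symm

lemma fCW1Deriv_eq_zero_of_mul_eq_sq {x : ℝ} (hx : x ∈ Ioo (0:ℝ) (1/3))
    (h : (2/3 - x) * (1/3 - x) = (2 * x) ^ 2) : fCW1Deriv x = 0 := by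
  obtain ⟨hx0, hx3⟩ := hx
  rw [fCW1Deriv, ← logb_mul (by linarith) (by linarith), h, logb_pow]
  push_cast
  ring

lemma sqrt33_sub_three_div_mem : (√33 - 3) / 18 ∈ Ioo (0:ℝ) (1/3) := by
  have h33 : √33 ^ 2 = 33 := sq_sqrt (by norm_num)
  have h5 : 5 < √33 := by nlinarith [sqrt_nonneg 33]
  have h6 : √33 < 6 := by nlinarith [sqrt_nonneg 33]
  constructor <;> linarith

lemma sqrt33_sub_three_div_eq :
    (2/3 - (√33 - 3) / 18) * (1/3 - (√33 - 3) / 18) = (2 * ((√33 - 3) / 18)) ^ 2 := by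
  linear_combination (-1/108 : ℝ) * sq_sqrt (show (0:ℝ) ≤ 33 by norm_num)

open Set in
/-- `f₁` is strictly concave on `(0, 1/3)`, has vanishing derivative
at `x* = (√33 − 3)/18`, and attains its maximum on `(0, 1/3)` there. -/
theorem fCW1_max :
    let xs : ℝ := (Real.sqrt 33 - 3) / 18
    StrictConcaveOn ℝ (Ioo (0:ℝ) (1/3)) fCW1 ∧
    deriv fCW1 xs = 0 ∧
    xs ∈ Ioo (0:ℝ) (1/3) ∧
    IsMaxOn fCW1 (Ioo (0:ℝ) (1/3)) xs := by
  intro xs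
  have hxs : xs ∈ Ioo (0:ℝ) (1/3) := sqrt33_sub_three_div_mem
  have hd : HasDerivAt fCW1 0 xs :=
    fCW1Deriv_eq_zero_of_mul_eq_sq hxs sqrt33_sub_three_div_eq ▸ hasDerivAt_fCW1 hxs
  refine ⟨strictConcaveOn_fCW1, hd.deriv, hxs, ?_⟩
  exact strictConcaveOn_fCW1.concaveOn.isMaxOn_of_hasDerivAt_eq_zero (by rwa [interior_Ioo]) hd
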